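/- If GMP(δ, δ) holds, then δ has the tree property: there are no δ-Aronszajn trees. -/

import Mathlib

open Cardinal

namespace GM

/-- The first-order language of set theory: a single binary relation. -/
def memLang : FirstOrder.Language :=
  { Functions := fun _ => Empty
    Relations := fun n => match n with | 2 => Unit | _ => Empty }

/-- Any set of ZF sets is a structure for the membership language,
interpreting the relation by `∈`. -/
instance setStructure (S : Set ZFSet) : memLang.Structure S where
  funMap {n} f _ := f.elim
  RelMap {n} r v :=
    match n, r, v with
    | 2, _, v => ((v 0 : ↥S) : ZFSet) ∈ ((v 1 : ↥S) : ZFSet)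
    | 0, r, _ => r.elim
    | 1, r, _ => r.elim
    | (_+3), r, _ => r.elim

/-- `M` is an elementary submodel of `H` (both viewed as ∈-structures). -/
def ElemSub (M H : Set ZFSet) : Prop :=
  ∃ h : M ⊆ H, ∀ (n : ℕ) (φ : memLang.Formula (Fin n)) (v : Fin n → M),
    φ.Realize (fun i => Set.inclusion h (v i)) ↔ φ.Realize v

/-- `x` is guessed in `M`: some `y ∈ M` has the same trace on `M` as `x`. -/
def Guessed (x : ZFSet) (M : Set ZFSet) : Prop :=
  ∃ y ∈ M, y.toSet ∩ M = x.toSet ∩ M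

/-- `x` is bounded in `M`: `x` is a subset of an element of `M`. -/
def Bounded (x : ZFSet) (M : Set ZFSet) : Prop :=
  ∃ y ∈ M, x.toSet ⊆ y.toSet

/-- `x` is δ-approximated in `M`: all intersections with `<δ`-sized elements of `M` lie in `M`. -/
def Approx (δ : Cardinal.{1}) (x : ZFSet) (M : Set ZFSet) : Prop :=
  ∀ a ∈ M, #a.toSet < δ → (x ∩ a) ∈ M

/-- `M` has the δ-guessing property (in `V`). -/
def IsGuessing (δ : Cardinal.{1}) (M : Set ZFSet) : Prop :=
  ∀ x : ZFSet, Bounded x M → Approx δ x M → Guessed x M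

/-- `M` has the δ-guessing property in `N`. -/
def IsGuessingIn (δ : Cardinal.{1}) (M N : Set ZFSet) : Prop :=
  ∀ x ∈ N, Bounded x M → Approx δ x M → Guessed x M

/-- The pair `(M, N)` has the δ-covering property (`≤ δ`-sized sets version). -/
def CoveringPair (δ : Cardinal.{1}) (M N : Set ZFSet) : Prop :=
  ∀ x ∈ N, #x.toSet ≤ δ → Bounded x M →
    ∃ y ∈ M, #y.toSet ≤ δ ∧ x.toSet ∩ M ⊆ y.toSet

/-- A transitive class. -/
def Transitive' (H : Set ZFSet) : Prop := ∀ x ∈ H, x.toSet ⊆ H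

/-- A powerful model: transitive and containing every set bounded in it. -/
def Powerful (H : Set ZFSet) : Prop :=
  Transitive' H ∧ ∀ x : ZFSet, Bounded x H → x ∈ H

/-- `κ` is `κ_M`: the least ordinal belonging to `M` but not a subset of `M`. -/
def IsKappa (M : Set ZFSet) (κ : ZFSet) : Prop :=
  κ.IsOrdinal ∧ κ ∈ M ∧ ¬ κ.toSet ⊆ M ∧
    ∀ β : ZFSet, β.IsOrdinal → β ∈ M → ¬ β.toSet ⊆ M → κ.toSet ⊆ β.toSet

/-- A δ-guessing elementary submodel: an elementary submodel of some powerful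
model with the δ-guessing property. -/
def IsGesm (δ : Cardinal.{1}) (M : Set ZFSet) : Prop :=
  (∃ H : Set ZFSet, Powerful H ∧ ElemSub M H) ∧ IsGuessing δ M

/-- The cofinality of the supremum of a set of (ZF-set) ordinals: the least
cardinality of a `⊆`-cofinal subset. -/
noncomputable def cofSup (A : Set ZFSet) : Cardinal.{1} :=
  sInf { c | ∃ B ⊆ A, #B = c ∧ ∀ x ∈ A, ∃ y ∈ B, x.toSet ⊆ y.toSet }

/-- Hereditarily of cardinality less than `θ`. -/
inductive Hered (θ : Cardinal.{1}) : ZFSet → Prop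
  | intro (x : ZFSet) : #x.toSet < θ → (∀ y ∈ x.toSet, Hered θ y) → Hered θ x

/-- The class `H_θ` of sets hereditarily of cardinality `< θ`. -/
def HSet (θ : Cardinal.{1}) : Set ZFSet := {x | Hered θ x}

/-- `S` is stationary in `𝒫_κ(X)`: every function `F` from finite subsets of `X`
to `<κ`-sized subsets of `X` has a closure point in `S`. -/
def StationaryIn (S : Set (Set ZFSet)) (X : Set ZFSet) (κ : Cardinal.{1}) : Prop :=
  ∀ F : Finset ZFSet → Set ZFSet, (∀ a : Finset ZFSet, F a ⊆ X ∧ #(F a) < κ) →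
    ∃ A ∈ S, A ⊆ X ∧ #A < κ ∧ ∀ a : Finset ZFSet, ↑a ⊆ A → F a ⊆ A

/-- The guessing model principle witnessed by models with property `P`:
for all sufficiently large regular `θ` there are stationarily many `<κ`-sized
δ-guessing elementary submodels of `H_θ` satisfying `P`. -/
def GMPwit (κ δ : Cardinal.{1}) (P : Set ZFSet → Prop) : Prop :=
  ∃ θ₀ : Cardinal.{1}, ∀ θ : Cardinal.{1}, θ₀ ≤ θ → θ.IsRegular →
    StationaryIn {M | ElemSub M (HSet θ) ∧ IsGuessing δ M ∧ #M < κ ∧ P M}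
      (HSet θ) κ

/-- The guessing model principle `GMP(κ, δ)`. -/
def GMP (κ δ : Cardinal.{1}) : Prop := GMPwit κ δ fun _ => True

/-- `R` is a binary relation on `T` (a set of ordered pairs from `T`). -/
def IsRel (T R : ZFSet) : Prop :=
  ∀ p ∈ R.toSet, ∃ s ∈ T.toSet, ∃ t ∈ T.toSet, p = ZFSet.pair s t

/-- The set of `R`-predecessors of `t` in `T`. -/
def Pred (T R t : ZFSet) : Set ZFSet := {s | s ∈ T.toSet ∧ ZFSet.pair s t ∈ R}

/-- `t` has level `α` in the tree `(T, R)`: the predecessors of `t` are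
order-isomorphic to the ordinal `α`. -/
def HasLevel (T R t α : ZFSet) : Prop :=
  α.IsOrdinal ∧ ∃ e : α.toSet ≃ Pred T R t,
    ∀ a b : α.toSet, (a : ZFSet) ∈ (b : ZFSet) ↔ ZFSet.pair (e a : ZFSet) (e b : ZFSet) ∈ R

/-- `(T, R)` is a tree of height the ordinal `Λ`. -/
def IsTreeOfHeight (T R Λ : ZFSet) : Prop :=
  Λ.IsOrdinal ∧ IsRel T R ∧
  (∀ s t u : ZFSet, ZFSet.pair s t ∈ R → ZFSet.pair t u ∈ R → ZFSet.pair s u ∈ R) ∧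
  (∀ t : ZFSet, ZFSet.pair t t ∉ R) ∧
  (∀ t ∈ T.toSet, ∃ α ∈ Λ.toSet, HasLevel T R t α) ∧
  (∀ α ∈ Λ.toSet, ∃ t ∈ T.toSet, HasLevel T R t α)

/-- `b` is a cofinal branch through the tree `(T, R)` of height `Λ`. -/
def IsBranch (T R Λ b : ZFSet) : Prop :=
  b.toSet ⊆ T.toSet ∧
  (∀ s ∈ b.toSet, ∀ t ∈ b.toSet, s = t ∨ ZFSet.pair s t ∈ R ∨ ZFSet.pair t s ∈ R) ∧
  ∀ α ∈ Λ.toSet, ∃ t ∈ b.toSet, HasLevel T R t α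

/-- Every level of `(T, R)` has size `< κ`. -/
def SlimTree (T R Λ : ZFSet) (κ : Cardinal.{1}) : Prop :=
  ∀ α ∈ Λ.toSet, #{t : ZFSet | t ∈ T.toSet ∧ HasLevel T R t α} < κ

/-- `Λ` is (as a ZF-set ordinal) the cardinal `c`: an ordinal of cardinality `c`
all of whose elements have cardinality `< c`. -/
def IsCardOrd (Λ : ZFSet) (c : Cardinal.{1}) : Prop :=
  Λ.IsOrdinal ∧ #Λ.toSet = c ∧ ∀ β ∈ Λ.toSet, #β.toSet < c

/-- `M` is closed under `<μ`-sized subsets (as sets of its elements). -/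
def ClosedUnder (μ : Cardinal.{1}) (M : Set ZFSet) : Prop :=
  ∀ A : Set ZFSet, A ⊆ M → #A < μ → ∃ z ∈ M, z.toSet = A

/-- `M` is closed under `<μ`-sized subsets which are bounded in `M`. -/
def SeqClosed (μ : Cardinal.{1}) (M : Set ZFSet) : Prop :=
  ∀ A : Set ZFSet, A ⊆ M → #A < μ → (∃ y ∈ M, A ⊆ y.toSet) → ∃ z ∈ M, z.toSet = A

/-- `β` is a limit point of the set (of ordinals) `c`. -/
def LimPt (c β : ZFSet) : Prop :=
  β ≠ ∅ ∧ ∀ γ ∈ β.toSet, ∃ ξ ∈ c.toSet, ξ ∈ β.toSet ∧ (γ ∈ ξ.toSet ∨ γ = ξ)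

/-- `c` is a club in the ordinal `α`. -/
def ClubIn (c α : ZFSet) : Prop :=
  c.toSet ⊆ α.toSet ∧ (∀ β ∈ α.toSet, ∃ γ ∈ c.toSet, β ∈ γ.toSet ∨ β = γ) ∧
  ∀ β ∈ α.toSet, LimPt c β → β ∈ c.toSet

/-- `c` has order type the ordinal `o`. -/
def HasOtp (c o : ZFSet) : Prop :=
  o.IsOrdinal ∧ ∃ e : o.toSet ≃ c.toSet,
    ∀ a b : o.toSet, (a : ZFSet) ∈ (b : ZFSet) ↔ ((e a : ZFSet) ∈ (e b : ZFSet))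

/-- `f` is (the graph of) a function from `a` to `b`. -/
def IsFuncRel (f a b : ZFSet) : Prop :=
  (∀ p ∈ f.toSet, ∃ x ∈ a.toSet, ∃ y ∈ b.toSet, p = ZFSet.pair x y) ∧
  ∀ x ∈ a.toSet, ∃! y : ZFSet, ZFSet.pair x y ∈ f

/-- `f` is a surjection from `a` onto `b`. -/
def SurjOnto (f a b : ZFSet) : Prop :=
  IsFuncRel f a b ∧ ∀ y ∈ b.toSet, ∃ x ∈ a.toSet, ZFSet.pair x y ∈ f

/-- `θ` is a cardinal in the (transitive) class `V`: an ordinal not surjected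
onto by any smaller ordinal via a function of `V`. -/
def IsCardinalIn (V : Set ZFSet) (θ : ZFSet) : Prop :=
  θ.IsOrdinal ∧ ∀ β ∈ θ.toSet, ∀ f ∈ V, ¬ SurjOnto f β θ

/-- A dense subset of a preorder. -/
def DenseSub (P : Type) [Preorder P] (D : Set P) : Prop := ∀ p : P, ∃ q ∈ D, q ≤ p

/-- A subset of a preorder dense below `p₀`. -/
def DenseBelow (P : Type) [Preorder P] (p₀ : P) (D : Set P) : Prop :=
  ∀ p : P, p ≤ p₀ → ∃ q ∈ D, q ≤ p

/-- A filter on a preorder. -/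
def IsFilterSet (P : Type) [Preorder P] (F : Set P) : Prop :=
  F.Nonempty ∧ (∀ p ∈ F, ∀ q : P, p ≤ q → q ∈ F) ∧
    ∀ p ∈ F, ∀ q ∈ F, ∃ r ∈ F, r ≤ p ∧ r ≤ q

/-- The forcing axiom `FA(P, κ)`: any κ-many dense sets are met by a filter. -/
def FA (P : Type) [Preorder P] (κ : Cardinal.{1}) : Prop :=
  ∀ 𝒟 : Set (Set P), Cardinal.lift.{1} #𝒟 ≤ κ →
    (∀ D ∈ 𝒟, DenseSub P D) →
    ∃ F : Set P, IsFilterSet P F ∧ ∀ D ∈ 𝒟, (F ∩ D).Nonempty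

end GM

/-!
Let `A` be a `δ`-guessing model of size `< δ`. Then `α = sup (A ∩ δ) < δ`; pick a node `t` on
level `α` and let `x` be the set of its predecessors. For `a ∈ A` of size `< δ` the levels of the
nodes in `a` are bounded by some `σ ∈ A ∩ α`, so `x ∩ a` is the set of predecessors in `a` of the
node `s ∈ A` of `x` on level `σ`. Hence `x` is `δ`-approximated in `A` and is guessed by some
`y ∈ A`. As `y` and `x` agree on `A`, any failure of `y` to be a cofinal branch, reflected to a
witness in `A`, would be a failure of `x`, a chain meeting every level in `A ∩ α`. Stationarity
of the guessing models lets us choose `A` closed under the few Skolem functions this argument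
needs.
-/

open ZFSet

namespace GM

section Ordinals

theorem _root_.ZFSet.IsOrdinal.eq_of_equiv {x y : ZFSet} (hx : x.IsOrdinal) (hy : y.IsOrdinal)
    (e : x.toSet ≃ y.toSet)
    (he : ∀ a b : x.toSet, (a : ZFSet) ∈ (b : ZFSet) ↔ (e a : ZFSet) ∈ (e b : ZFSet)) :
    x = y := by
  have fix : ∀ a (ha : a ∈ x), (e ⟨a, ha⟩ : ZFSet) = a := by
    intro a
    induction a using ZFSet.inductionOn with
    | _ a IH =>
      intro ha
      ext z
      constructor
      · intro hz
        set b := e.symm ⟨z, hy.mem_trans hz (e ⟨a, ha⟩).2⟩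
        have hbz : (e b : ZFSet) = z := by simp [b]
        have hba : (b : ZFSet) ∈ a := (he b ⟨a, ha⟩).2 (hbz ▸ hz)
        rwa [← hbz, ← Subtype.coe_eta b b.2, IH b hba b.2]
      · intro hz
        have h := (he ⟨z, hx.mem_trans hz ha⟩ ⟨a, ha⟩).1 hz
        rwa [IH z hz] at h
  ext z
  constructor
  · intro hz
    rw [← fix z hz]
    exact (e ⟨z, hz⟩).2
  · intro hz
    have h := fix _ (e.symm ⟨z, hz⟩).2
    simp only [Subtype.coe_eta, Equiv.apply_symm_apply] at h
    rw [h]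
    exact (e.symm ⟨z, hz⟩).2

variable {Δ : ZFSet} {s : Set ZFSet}

/-- `sup {β + 1 | β ∈ s ∩ Δ}`. -/
def ordHull (Δ : ZFSet) (s : Set ZFSet) : ZFSet :=
  ZFSet.sep (fun ξ => ∃ β ∈ s, β ∈ Δ ∧ ξ ⊆ β) Δ

theorem mem_ordHull {ξ : ZFSet} : ξ ∈ ordHull Δ s ↔ ξ ∈ Δ ∧ ∃ β ∈ s, β ∈ Δ ∧ ξ ⊆ β :=
  mem_sep

theorem mem_ordHull_of_mem {β : ZFSet} (hβ : β ∈ s) (hβΔ : β ∈ Δ) : β ∈ ordHull Δ s :=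
  mem_ordHull.2 ⟨hβΔ, β, hβ, hβΔ, subset_rfl⟩

theorem isOrdinal_ordHull (hΔ : Δ.IsOrdinal) : (ordHull Δ s).IsOrdinal := by
  refine isOrdinal_iff_forall_mem_isOrdinal.2 ⟨fun ξ hξ η hη => ?_, fun ξ hξ => ?_⟩
  · obtain ⟨hξΔ, β, hβs, hβΔ, hξβ⟩ := mem_ordHull.1 hξ
    exact mem_ordHull.2
      ⟨hΔ.mem_trans hη hξΔ, β, hβs, hβΔ, ((hΔ.mem hξΔ).subset_of_mem hη).trans hξβ⟩
  · exact hΔ.mem (mem_ordHull.1 hξ).1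

theorem ordHull_mem {δ : Cardinal} (hδ : δ.IsRegular) (hΔ : IsCardOrd Δ δ)
    (hs : #↥(s ∩ Δ.toSet) < δ) : ordHull Δ s ∈ Δ := by
  have hsub : (ordHull Δ s).toSet ⊆ ⋃ β ∈ s ∩ Δ.toSet, insert β β.toSet := by
    intro ξ hξ
    obtain ⟨hξΔ, β, hβs, hβΔ, hξβ⟩ := mem_ordHull.1 hξ
    refine Set.mem_biUnion ⟨hβs, hβΔ⟩ ?_
    exact ((hΔ.1.mem hξΔ).subset_iff_eq_or_mem (hΔ.1.mem hβΔ)).1 hξβ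
  have hcard : #(ordHull Δ s).toSet < δ := by
    refine (mk_le_mk_of_subset hsub).trans_lt
      ((card_biUnion_lt_iff_forall_of_isRegular hδ hs).2 fun β hβ => ?_)
    exact mk_insert_le.trans_lt (add_lt_of_lt hδ.aleph0_le (hΔ.2.2 β hβ.2)
      (one_lt_aleph0.trans_le hδ.aleph0_le))
  rcases ((isOrdinal_ordHull hΔ.1).subset_iff_eq_or_mem hΔ.1).1
    (fun ξ hξ => (mem_ordHull.1 hξ).1) with h | h
  · rw [h, hΔ.2.1] at hcard
    exact absurd hcard (lt_irrefl δ)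
  · exact h

end Ordinals

section Witness

variable {α : Type*} [Nonempty α] {p : α → Prop}

def witness (p : α → Prop) : Set α := {u | p u ∧ u = Classical.epsilon p}

theorem witness_subsingleton : (witness p).Subsingleton :=
  fun _ hu _ hv => hu.2.trans hv.2.symm

theorem exists_mem_of_witness_subset {A : Set α} (hA : witness p ⊆ A) (h : ∃ u, p u) :
    ∃ u ∈ A, p u :=
  ⟨_, hA ⟨Classical.epsilon_spec h, rfl⟩, Classical.epsilon_spec h⟩

end Witness

theorem StationaryIn.exists_closed {S : Set (Set ZFSet)} {X : Set ZFSet} {κ : Cardinal}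
    (hS : StationaryIn S X κ) (hκ : κ.IsRegular) {c : ZFSet} (hc : c ∈ X)
    (G : ZFSet → ZFSet → Set ZFSet) (hGX : ∀ z ∈ X, ∀ w ∈ X, G z w ⊆ X)
    (hGκ : ∀ z w, #(G z w) < κ) :
    ∃ A ∈ S, #A < κ ∧ c ∈ A ∧ ∀ z ∈ A, ∀ w ∈ A, G z w ⊆ A := by
  classical
  set F : Finset ZFSet → Set ZFSet :=
    fun a => insert c (⋃ z ∈ (a : Set ZFSet) ∩ X, ⋃ w ∈ (a : Set ZFSet) ∩ X, G z w)
  have hFX : ∀ a, F a ⊆ X := fun a => Set.insert_subset hc <|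
    Set.iUnion₂_subset fun z hz => Set.iUnion₂_subset fun w hw => hGX z hz.2 w hw.2
  have hFκ : ∀ a, #(F a) < κ := by
    intro a
    have ha : #↥((a : Set ZFSet) ∩ X) < κ :=
      (a.finite_toSet.inter_of_left X).lt_aleph0.trans_le hκ.aleph0_le
    refine mk_insert_le.trans_lt <|
      add_lt_of_lt hκ.aleph0_le ?_ (one_lt_aleph0.trans_le hκ.aleph0_le)
    exact (card_biUnion_lt_iff_forall_of_isRegular hκ ha).2 fun z _ =>
      (card_biUnion_lt_iff_forall_of_isRegular hκ ha).2 fun w _ => hGκ z w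
  obtain ⟨A, hAS, hAX, hAκ, hcl⟩ := hS F fun a => ⟨hFX a, hFκ a⟩
  refine ⟨A, hAS, hAκ, hcl ∅ (by simp) (Set.mem_insert c _), fun z hz w hw => ?_⟩
  have hGF : G z w ⊆ F {z, w} := fun u hu => Set.mem_insert_of_mem _ <|
    Set.mem_biUnion ⟨by simp, hAX hz⟩ (Set.mem_biUnion ⟨by simp, hAX hw⟩ hu)
  exact hGF.trans (hcl {z, w} (by simp [Set.insert_subset_iff, hz, hw]))

section Hereditary

variable {θ θ' : Cardinal.{1}} {x y : ZFSet}

theorem Hered.mono (h : θ ≤ θ') (hx : Hered θ x) : Hered θ' x := by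
  induction hx with
  | intro x hx _ IH => exact .intro x (hx.trans_le h) IH

theorem Hered.of_mem (hx : Hered θ x) (hy : y ∈ x) : Hered θ y := by
  cases hx with
  | intro x _ h => exact h y hy

theorem Hered.of_subset (hx : Hered θ x) (hy : y ⊆ x) : Hered θ y := by
  cases hx with
  | intro x hcard h =>
    exact .intro y ((mk_le_mk_of_subset hy).trans_lt hcard) fun z hz => h z (hy hz)

theorem exists_hered (x : ZFSet) : ∃ θ, Hered θ x := by
  induction x using ZFSet.inductionOn with
  | _ x IH =>
    choose f hf using fun y : x.toSet => IH y y.2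
    refine ⟨Order.succ (#x.toSet ⊔ ⨆ y, f y),
      .intro x (le_sup_left.trans_lt (Order.lt_succ _)) fun y hy => (hf ⟨y, hy⟩).mono ?_⟩
    exact ((le_ciSup bddAbove_of_small (⟨y, hy⟩ : x.toSet)).trans le_sup_right).trans
      (Order.le_succ _)

theorem exists_isRegular_hered (c : Cardinal.{1}) (x : ZFSet) :
    ∃ θ, c ≤ θ ∧ θ.IsRegular ∧ Hered θ x := by
  obtain ⟨θ, hθ⟩ := exists_hered x
  exact ⟨Order.succ (c ⊔ θ ⊔ ℵ₀), (le_sup_left.trans le_sup_left).trans (Order.le_succ _),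
    isRegular_succ le_sup_right, hθ.mono ((le_sup_right.trans le_sup_left).trans (Order.le_succ _))⟩

end Hereditary

section Trees

variable {T R Δ : ZFSet}

theorem HasLevel.unique {u β β' : ZFSet} (h : HasLevel T R u β) (h' : HasLevel T R u β') :
    β = β' := by
  obtain ⟨hβ, e, he⟩ := h
  obtain ⟨hβ', e', he'⟩ := h'
  refine hβ.eq_of_equiv hβ' (e.trans e'.symm) fun a b => ?_
  simpa [he'] using he a b

theorem hasLevel_apply {t α : ZFSet}
    (htrans : ∀ s u v : ZFSet, pair s u ∈ R → pair u v ∈ R → pair s v ∈ R)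
    (hα : α.IsOrdinal) (e : α.toSet ≃ Pred T R t)
    (he : ∀ a b : α.toSet, (a : ZFSet) ∈ (b : ZFSet) ↔ pair (e a : ZFSet) (e b : ZFSet) ∈ R)
    (γ : α.toSet) : HasLevel T R (e γ) γ := by
  let e' : (γ : ZFSet).toSet ≃ Pred T R (e γ) :=
    (Equiv.subtypeSubtypeEquivSubtype fun h => hα.mem_trans h γ.2).symm.trans <|
      (e.subtypeEquiv fun a => he a γ).trans <|
        (Equiv.subtypeSubtypeEquivSubtypeInter _ _).trans <|
          Equiv.subtypeEquivRight fun s =>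
            ⟨fun h => ⟨h.1.1, h.2⟩, fun h => ⟨⟨h.1, htrans _ _ _ h.2 (e γ).2.2⟩, h.2⟩⟩
  exact ⟨hα.mem γ.2, e', fun a b => he ⟨a, hα.mem_trans a.2 γ.2⟩ ⟨b, hα.mem_trans b.2 γ.2⟩⟩

def predecessors (T R t : ZFSet) : ZFSet := ZFSet.sep (fun s => pair s t ∈ R) T

theorem mem_predecessors {t u : ZFSet} : u ∈ predecessors T R t ↔ u ∈ T ∧ pair u t ∈ R :=
  mem_sep

def Comparable (R s t : ZFSet) : Prop := s = t ∨ pair s t ∈ R ∨ pair t s ∈ R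

theorem comparable_of_mem_pred {t α : ZFSet} (hα : α.IsOrdinal) (e : α.toSet ≃ Pred T R t)
    (he : ∀ a b : α.toSet, (a : ZFSet) ∈ (b : ZFSet) ↔ pair (e a : ZFSet) (e b : ZFSet) ∈ R)
    {u v : ZFSet} (hu : u ∈ Pred T R t) (hv : v ∈ Pred T R t) : Comparable R u v := by
  rcases (hα.mem (e.symm ⟨u, hu⟩).2).mem_trichotomous (hα.mem (e.symm ⟨v, hv⟩).2)
    with h | h | h
  · exact Or.inr (Or.inl (by simpa using (he _ _).1 h))
  · exact Or.inl (by simpa using congrArg (fun a => (e a : ZFSet)) (Subtype.ext h))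
  · exact Or.inr (Or.inr (by simpa using (he _ _).1 h))

def levelHull (T R Δ a : ZFSet) : ZFSet := ordHull Δ {β | ∃ u ∈ a, HasLevel T R u β}

theorem card_levels_le (a : ZFSet) : #{β | ∃ u ∈ a, HasLevel T R u β} ≤ #a.toSet := by
  refine (mk_le_mk_of_subset ?_).trans
    (mk_image_le (f := fun u => Classical.epsilon (HasLevel T R u)) (s := a.toSet))
  rintro β ⟨u, hu, hβ⟩
  exact ⟨u, hu, (hβ.unique (Classical.epsilon_spec ⟨β, hβ⟩)).symm⟩

/-- Skolem functions for the tree; the witnesses detect each way in which `z` can fail to be a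
cofinal branch. -/
def treeSkolem (T R Δ z w : ZFSet) : Set ZFSet :=
  {u | u ∈ T ∧ z ∈ Δ ∧ HasLevel T R u z} ∪
    ({levelHull T R Δ z, predecessors T R z ∩ w} ∪
      witness (fun u => u ∈ z ∧ u ∉ T) ∪
      witness (fun u => u ∈ z ∧ ∃ v ∈ z, ¬ Comparable R u v) ∪
      witness (fun v => v ∈ z ∧ ¬ Comparable R w v) ∪
      witness (fun β => β ∈ Δ ∧ ∀ u ∈ z, ¬ HasLevel T R u β))

theorem card_treeSkolem_lt {δ : Cardinal} (hδ : ℵ₀ ≤ δ) (hslim : SlimTree T R Δ δ)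
    (z w : ZFSet) : #(treeSkolem T R Δ z w) < δ := by
  refine (mk_union_le _ _).trans_lt (add_lt_of_lt hδ ?_ (Set.Finite.lt_aleph0 ?_ |>.trans_le hδ))
  · by_cases hz : z ∈ Δ
    · exact (mk_le_mk_of_subset (t := {u | u ∈ T.toSet ∧ HasLevel T R u z})
        fun u hu => ⟨hu.1, hu.2.2⟩).trans_lt (hslim z hz)
    · simpa [hz] using aleph0_pos.trans_le hδ
  · refine ((((Set.toFinite _).union ?_).union ?_).union ?_).union ?_ <;>
      exact witness_subsingleton.finite

theorem treeSkolem_subset_hSet {θ : Cardinal.{1}} (hT : T ∈ HSet θ) (hΔ : Δ ∈ HSet θ)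
    {z w : ZFSet} (hz : z ∈ HSet θ) : treeSkolem T R Δ z w ⊆ HSet θ := by
  rintro u (⟨huT, -⟩ | (((((rfl | rfl) | hu) | hu) | hu) | hu))
  · exact Hered.of_mem hT huT
  · exact Hered.of_subset hΔ fun ξ hξ => (mem_ordHull.1 hξ).1
  · exact Hered.of_subset hT fun v hv => (mem_predecessors.1 (mem_inter.1 hv).1).1
  · exact Hered.of_mem hz hu.1.1
  · exact Hered.of_mem hz hu.1.1
  · exact Hered.of_mem hz hu.1.1
  · exact Hered.of_mem hΔ hu.1.1

structure IsTreeClosed (T R Δ : ZFSet) (A : Set ZFSet) : Prop where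
  tree_mem : T ∈ A
  mem_of_hasLevel : ∀ β ∈ A, β ∈ Δ → ∀ u ∈ T, HasLevel T R u β → u ∈ A
  levelHull_mem : ∀ a ∈ A, levelHull T R Δ a ∈ A
  predecessors_inter_mem : ∀ s ∈ A, ∀ a ∈ A, predecessors T R s ∩ a ∈ A
  exists_mem_not_mem : ∀ y ∈ A, (∃ u ∈ y, u ∉ T) → ∃ u ∈ A, u ∈ y ∧ u ∉ T
  exists_mem_incomparable : ∀ y ∈ A, (∃ u ∈ y, ∃ v ∈ y, ¬ Comparable R u v) →
    ∃ u ∈ A, u ∈ y ∧ ∃ v ∈ y, ¬ Comparable R u v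
  exists_mem_incomparable_with : ∀ y ∈ A, ∀ u ∈ A, (∃ v ∈ y, ¬ Comparable R u v) →
    ∃ v ∈ A, v ∈ y ∧ ¬ Comparable R u v
  exists_mem_missing_level : ∀ y ∈ A, (∃ β ∈ Δ, ∀ u ∈ y, ¬ HasLevel T R u β) →
    ∃ β ∈ A, β ∈ Δ ∧ ∀ u ∈ y, ¬ HasLevel T R u β

theorem isTreeClosed_of_treeSkolem_subset {A : Set ZFSet} (hT : T ∈ A)
    (hA : ∀ z ∈ A, ∀ w ∈ A, treeSkolem T R Δ z w ⊆ A) : IsTreeClosed T R Δ A where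
  tree_mem := hT
  mem_of_hasLevel β hβ hβΔ u hu hl := hA β hβ T hT (Or.inl ⟨hu, hβΔ, hl⟩)
  levelHull_mem a ha := hA a ha T hT (by simp [treeSkolem])
  predecessors_inter_mem s hs a ha := hA s hs a ha (by simp [treeSkolem])
  exists_mem_not_mem y hy := exists_mem_of_witness_subset <|
    Set.Subset.trans (fun _ hu => by simp [treeSkolem, hu]) (hA y hy T hT)
  exists_mem_incomparable y hy := exists_mem_of_witness_subset <|
    Set.Subset.trans (fun _ hu => by simp [treeSkolem, hu]) (hA y hy T hT)
  exists_mem_incomparable_with y hy u hu := exists_mem_of_witness_subset <|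
    Set.Subset.trans (fun _ hu => by simp [treeSkolem, hu]) (hA y hy u hu)
  exists_mem_missing_level y hy := exists_mem_of_witness_subset <|
    Set.Subset.trans (fun _ hu => by simp [treeSkolem, hu]) (hA y hy T hT)

end Trees

section Branch

variable {T R Δ t α : ZFSet} {δ : Cardinal.{1}} {A : Set ZFSet}

theorem approx_predecessors (hδ : δ.IsRegular) (hΔ : IsCardOrd Δ δ)
    (htrans : ∀ s u v : ZFSet, pair s u ∈ R → pair u v ∈ R → pair s v ∈ R)
    (hA : IsTreeClosed T R Δ A) (hαΔ : α ∈ Δ) (hAα : ∀ β ∈ A, β ∈ Δ → β ∈ α)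
    (e : α.toSet ≃ Pred T R t)
    (he : ∀ a b : α.toSet, (a : ZFSet) ∈ (b : ZFSet) ↔ pair (e a : ZFSet) (e b : ZFSet) ∈ R) :
    Approx δ (predecessors T R t) A := by
  have hα := hΔ.1.mem hαΔ
  intro a ha hacard
  set σ := levelHull T R Δ a
  have hσΔ : σ ∈ Δ := ordHull_mem hδ hΔ
    (((mk_le_mk_of_subset Set.inter_subset_left).trans (card_levels_le a)).trans_lt hacard)
  have hσα : σ ∈ α := hAα σ (hA.levelHull_mem a ha) hσΔ
  set s := e ⟨σ, hσα⟩
  have hsA : (s : ZFSet) ∈ A := hA.mem_of_hasLevel σ (hA.levelHull_mem a ha) hσΔ s s.2.1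
    (hasLevel_apply htrans hα e he _)
  suffices predecessors T R t ∩ a = predecessors T R s ∩ a by
    rw [this]
    exact hA.predecessors_inter_mem s hsA a ha
  ext u
  simp only [mem_inter, mem_predecessors]
  constructor
  · rintro ⟨⟨huT, hut⟩, hua⟩
    refine ⟨⟨huT, ?_⟩, hua⟩
    set γ := e.symm ⟨u, huT, hut⟩
    have hγ : HasLevel T R u γ := by simpa [γ] using hasLevel_apply htrans hα e he γ
    have hγσ : (γ : ZFSet) ∈ σ := mem_ordHull_of_mem ⟨u, hua, hγ⟩ (hΔ.1.mem_trans γ.2 hαΔ)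
    simpa [γ] using (he γ ⟨σ, hσα⟩).1 hγσ
  · rintro ⟨⟨huT, hus⟩, hua⟩
    exact ⟨⟨huT, htrans _ _ _ hus s.2.2⟩, hua⟩

theorem isBranch_of_inter_eq
    (htrans : ∀ s u v : ZFSet, pair s u ∈ R → pair u v ∈ R → pair s v ∈ R)
    (hA : IsTreeClosed T R Δ A) (hα : α.IsOrdinal) (hAα : ∀ β ∈ A, β ∈ Δ → β ∈ α)
    (e : α.toSet ≃ Pred T R t)
    (he : ∀ a b : α.toSet, (a : ZFSet) ∈ (b : ZFSet) ↔ pair (e a : ZFSet) (e b : ZFSet) ∈ R)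
    {y : ZFSet} (hyA : y ∈ A) (hy : y.toSet ∩ A = (predecessors T R t).toSet ∩ A) :
    IsBranch T R Δ y := by
  have trace : ∀ u ∈ A, u ∈ y → u ∈ Pred T R t := fun u hu huy =>
    mem_predecessors.1 (Set.ext_iff.1 hy u |>.1 ⟨huy, hu⟩).1
  refine ⟨fun u hu => ?_, fun u hu v hv => ?_, fun β hβ => ?_⟩
  · by_contra huT
    obtain ⟨u, hu, huy, huT⟩ := hA.exists_mem_not_mem y hyA ⟨u, hu, huT⟩
    exact huT (trace u hu huy).1
  · by_contra huv
    obtain ⟨u, hu, huy, hinc⟩ := hA.exists_mem_incomparable y hyA ⟨u, hu, v, hv, huv⟩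
    obtain ⟨v, hv, hvy, huv⟩ := hA.exists_mem_incomparable_with y hyA u hu hinc
    exact huv (comparable_of_mem_pred hα e he (trace u hu huy) (trace v hv hvy))
  · by_contra hmiss
    obtain ⟨β, hβA, hβΔ, hmiss⟩ :=
      hA.exists_mem_missing_level y hyA ⟨β, hβ, fun u hu hl => hmiss ⟨u, hu, hl⟩⟩
    set s := e ⟨β, hAα β hβA hβΔ⟩
    have hs := hasLevel_apply htrans hα e he ⟨β, hAα β hβA hβΔ⟩
    have hsA : (s : ZFSet) ∈ A := hA.mem_of_hasLevel β hβA hβΔ s s.2.1 hs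
    have hsy : (s : ZFSet) ∈ y :=
      (Set.ext_iff.1 hy s |>.2 ⟨mem_predecessors.2 s.2, hsA⟩).1
    exact hmiss s hsy hs

theorem exists_branch_of_isTreeClosed (hδ : δ.IsRegular) (hΔ : IsCardOrd Δ δ)
    (htree : IsTreeOfHeight T R Δ) (hA : IsTreeClosed T R Δ A)
    (hguess : IsGuessing δ A) (hAδ : #A < δ) : ∃ b, IsBranch T R Δ b := by
  obtain ⟨-, -, htrans, -, -, hlevels⟩ := htree
  have hαΔ : ordHull Δ A ∈ Δ :=
    ordHull_mem hδ hΔ ((mk_le_mk_of_subset Set.inter_subset_left).trans_lt hAδ)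
  have hAα : ∀ β ∈ A, β ∈ Δ → β ∈ ordHull Δ A := fun β hβ hβΔ => mem_ordHull_of_mem hβ hβΔ
  obtain ⟨t, -, -, e, he⟩ := hlevels _ hαΔ
  obtain ⟨y, hyA, hy⟩ := hguess (predecessors T R t)
    ⟨T, hA.tree_mem, fun u hu => (mem_predecessors.1 hu).1⟩
    (approx_predecessors hδ hΔ htrans hA hαΔ hAα e he)
  exact ⟨y, isBranch_of_inter_eq htrans hA (hΔ.1.mem hαΔ) hAα e he hyA hy⟩

end Branch

theorem exists_isTreeClosed_of_GMP {δ : Cardinal.{1}} (hδ : δ.IsRegular) (hGMP : GMP δ δ)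
    {T R Δ : ZFSet} (hslim : SlimTree T R Δ δ) :
    ∃ A, IsGuessing δ A ∧ #A < δ ∧ IsTreeClosed T R Δ A := by
  obtain ⟨θ₀, hθ₀⟩ := hGMP
  obtain ⟨θ, hθ₀θ, hθ, hTΔ⟩ := exists_isRegular_hered θ₀ {T, Δ}
  have hT : T ∈ HSet θ := hTΔ.of_mem (by simp)
  have hΔ : Δ ∈ HSet θ := hTΔ.of_mem (by simp)
  obtain ⟨A, ⟨-, hguess, -, -⟩, hAδ, hTA, hcl⟩ :=
    (hθ₀ θ hθ₀θ hθ).exists_closed hδ hT (treeSkolem T R Δ)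
      (fun z hz _ _ => treeSkolem_subset_hSet hT hΔ hz) (card_treeSkolem_lt hδ.aleph0_le hslim)
  exact ⟨A, hguess, hAδ, isTreeClosed_of_treeSkolem_subset hTA hcl⟩

end GM

/-- `GMP(δ, δ)` implies the tree property at δ. -/
theorem stmt10
    (δ : Cardinal.{1}) (hδ : δ.IsRegular) (hGMP : GM.GMP δ δ) :
    ∀ T R Δ : ZFSet, GM.IsCardOrd Δ δ → GM.IsTreeOfHeight T R Δ →
      GM.SlimTree T R Δ δ → ∃ b : ZFSet, GM.IsBranch T R Δ b := by
  intro T R Δ hΔ htree hslim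
  obtain ⟨A, hguess, hAδ, hA⟩ := GM.exists_isTreeClosed_of_GMP hδ hGMP hslim
  exact GM.exists_branch_of_isTreeClosed hδ hΔ htree hA hguess hAδ
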